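/- Let E be a real inner product space, T̃ : E → E nonexpansive, λ ∈ (0,1), T x = λ • x + (1 − λ) • T̃ x, and R x = T x − x. Suppose T has a fixed point. Then for any sequence (z_k) with z_{k+1} = T z_k for all k, the residual norms converge to zero: ‖R z_k‖ → 0 as k → ∞. -/

import Mathlib

open Filter
open RealInnerProductSpace

lemma stmt4_convex_norm_sq {E : Type*} [NormedAddCommGroup E] [InnerProductSpace ℝ E]
    (l : ℝ) (a b : E) :
    ‖l • a + (1 - l) • b‖ ^ 2 =
      l * ‖a‖ ^ 2 + (1 - l) * ‖b‖ ^ 2 - l * (1 - l) * ‖a - b‖ ^ 2 := by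
  have h : ∀ v : E, ‖v‖ ^ 2 = ⟪v, v⟫ := fun v => (real_inner_self_eq_norm_sq v).symm
  simp only [h, inner_add_left, inner_add_right, inner_sub_left, inner_sub_right,
    real_inner_smul_left, real_inner_smul_right]
  rw [real_inner_comm b a]
  ring

/-- if `T̃` is nonexpansive, `λ ∈ (0,1)`, `T x = λ•x + (1-λ)•T̃ x`,
`R x = T x - x` and `T` has a fixed point, then along any orbit `z_{k+1} = T z_k`
the residual norms `‖R z_k‖` converge to zero. -/
theorem stmt4 {E : Type*} [NormedAddCommGroup E] [InnerProductSpace ℝ E]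
    (T' : E → E) (hT' : ∀ x y : E, ‖T' x - T' y‖ ≤ ‖x - y‖)
    (l : ℝ) (hl0 : 0 < l) (hl1 : l < 1)
    (T R : E → E)
    (hT : ∀ x, T x = l • x + (1 - l) • T' x)
    (hR : ∀ x, R x = T x - x)
    (hfix : ∃ y : E, T y = y) :
    ∀ z : ℕ → E, (∀ k, z (k + 1) = T (z k)) →
      Tendsto (fun k : ℕ => ‖R (z k)‖) atTop (nhds 0) := by
  obtain ⟨y, hy⟩ := hfix
  intro z hz
  have hl1' : (0:ℝ) < 1 - l := by linarith
  -- y is a fixed point of T'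
  have hy' : T' y = y := by
    have h1 : l • y + (1 - l) • T' y = y := by rw [← hT]; exact hy
    have h2 : (1 - l) • T' y = (1 - l) • y := by
      have : (1 - l) • T' y = y - l • y := by linear_combination (norm := module) h1
      rw [this]
      module
    have := smul_right_injective E (ne_of_gt hl1') h2
    exact this
  -- R x = (1-l) • (T' x - x)
  have hRalt : ∀ x, R x = (1 - l) • (T' x - x) := by
    intro x
    rw [hR, hT]
    module
  -- T is nonexpansive
  have hTne : ∀ x w : E, ‖T x - T w‖ ≤ ‖x - w‖ := by
    intro x w
    have : T x - T w = l • (x - w) + (1 - l) • (T' x - T' w) := by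
      rw [hT, hT]; module
    rw [this]
    calc ‖l • (x - w) + (1 - l) • (T' x - T' w)‖
        ≤ ‖l • (x - w)‖ + ‖(1 - l) • (T' x - T' w)‖ := norm_add_le _ _
      _ = l * ‖x - w‖ + (1 - l) * ‖T' x - T' w‖ := by
          rw [norm_smul, norm_smul, Real.norm_of_nonneg hl0.le,
            Real.norm_of_nonneg hl1'.le]
      _ ≤ l * ‖x - w‖ + (1 - l) * ‖x - w‖ := by
          have := hT' x w
          nlinarith
      _ = ‖x - w‖ := by ring
  -- key inequality (Fejér monotonicity with residual term)
  set c : ℝ := l / (1 - l) with hc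
  have hcpos : 0 < c := div_pos hl0 hl1'
  have key : ∀ x : E, ‖T x - y‖ ^ 2 + c * ‖R x‖ ^ 2 ≤ ‖x - y‖ ^ 2 := by
    intro x
    have hdecomp : T x - y = l • (x - y) + (1 - l) • (T' x - y) := by
      rw [hT]
      have : y = l • y + (1 - l) • y := by module
      nth_rewrite 1 [this]
      module
    have hid := stmt4_convex_norm_sq l (x - y) (T' x - y)
    have hsub : x - y - (T' x - y) = x - T' x := by abel
    rw [hsub] at hid
    have hbound : ‖T' x - y‖ ≤ ‖x - y‖ := by
      have := hT' x y; rwa [hy'] at this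
    have hRnorm : ‖R x‖ ^ 2 = (1 - l) ^ 2 * ‖x - T' x‖ ^ 2 := by
      rw [hRalt, norm_smul, Real.norm_of_nonneg hl1'.le, ← norm_neg, neg_sub]
      ring
    rw [hdecomp, hid, hRnorm, hc]
    have h1 : (1 - l) * ‖T' x - y‖ ^ 2 ≤ (1 - l) * ‖x - y‖ ^ 2 := by
      have : ‖T' x - y‖ ^ 2 ≤ ‖x - y‖ ^ 2 := by nlinarith [norm_nonneg (T' x - y)]
      nlinarith
    have h2 : l / (1 - l) * ((1 - l) ^ 2 * ‖x - T' x‖ ^ 2)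
        = l * (1 - l) * ‖x - T' x‖ ^ 2 := by
      field_simp
    nlinarith
  -- residual norms are nonincreasing
  have hmono : ∀ k, ‖R (z (k + 1))‖ ≤ ‖R (z k)‖ := by
    intro k
    rw [hR, hR, hz k]
    exact hTne _ _
  have hanti : Antitone fun k => ‖R (z k)‖ := antitone_nat_of_succ_le hmono
  -- telescoping: a (n+1) + c * sum ≤ a 0
  set a : ℕ → ℝ := fun k => ‖z k - y‖ ^ 2 with ha
  set b : ℕ → ℝ := fun k => ‖R (z k)‖ ^ 2 with hb
  have hstep : ∀ k, a (k + 1) + c * b k ≤ a k := by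
    intro k
    have := key (z k)
    rwa [← hz k] at this
  have htel : ∀ n, a n + c * ∑ k ∈ Finset.range n, b k ≤ a 0 := by
    intro n
    induction n with
    | zero => simp
    | succ n ih =>
      rw [Finset.sum_range_succ]
      have := hstep n
      nlinarith
  -- b n is bounded: (n+1) * b n ≤ sum ≤ a 0 / c
  have hbnonneg : ∀ k, 0 ≤ b k := fun k => sq_nonneg _
  have hbound : ∀ n : ℕ, b n ≤ a 0 / (c * (n + 1)) := by
    intro n
    have hbanti : ∀ i ∈ Finset.range (n + 1), b n ≤ b i := by
      intro i hi
      have hin : i ≤ n := Nat.lt_succ_iff.mp (Finset.mem_range.mp hi)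
      have := hanti hin
      simp only [b]
      nlinarith [norm_nonneg (R (z n)), norm_nonneg (R (z i))]
    have hsum : (n + 1 : ℝ) * b n ≤ ∑ k ∈ Finset.range (n + 1), b k := by
      calc (n + 1 : ℝ) * b n = ∑ _k ∈ Finset.range (n + 1), b n := by
            rw [Finset.sum_const, Finset.card_range]; ring
        _ ≤ _ := Finset.sum_le_sum hbanti
    have hsum2 : c * ∑ k ∈ Finset.range (n + 1), b k ≤ a 0 := by
      have := htel (n + 1)
      have hanonneg : 0 ≤ a (n + 1) := sq_nonneg _
      linarith
    have hpos : 0 < c * (n + 1 : ℝ) := by positivity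
    rw [le_div_iff₀ hpos]
    nlinarith
  -- squeeze to get b → 0
  have htendb : Tendsto b atTop (nhds 0) := by
    apply squeeze_zero hbnonneg hbound
    have h1 : Tendsto (fun n : ℕ => (1 : ℝ) / (n + 1)) atTop (nhds 0) :=
      tendsto_one_div_add_atTop_nhds_zero_nat
    have h2 : Tendsto (fun n : ℕ => (a 0 / c) * (1 / (n + 1))) atTop (nhds 0) := by
      have := h1.const_mul (a 0 / c)
      simpa using this
    convert h2 using 2 with n
    field_simp
  -- conclude via sqrt
  have : Tendsto (fun k : ℕ => Real.sqrt (b k)) atTop (nhds (Real.sqrt 0)) :=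
    (Real.continuous_sqrt.continuousAt).tendsto.comp htendb
  rw [Real.sqrt_zero] at this
  convert this using 2 with k
  rw [hb]
  exact (Real.sqrt_sq (norm_nonneg _)).symm
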